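/- For every real number x and angle θ, the Jacobi–Anger expansion holds: e^{i x cos θ} = J₀(x) + Σ_{s ∈ ℤ, s ≠ 0} iˢ J_s(x) e^{i s θ}, where J_s denotes the Bessel function of the first kind of integer order s, and the series converges absolutely. -/

import Mathlib

open Complex

/-- Bessel function of the first kind of nonnegative integer order. -/
noncomputable def Jnat (n : ℕ) (x : ℝ) : ℝ :=
  ∑' m : ℕ, ((-1 : ℝ) ^ m / (m.factorial * (m + n).factorial)) * (x / 2) ^ (2 * m + n)

/-- Bessel function of the first kind of integer order, with `J_{-s} = (-1)^s J_s`. -/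
noncomputable def J (s : ℤ) (x : ℝ) : ℝ :=
  if 0 ≤ s then Jnat s.toNat x else (-1 : ℝ) ^ (-s).toNat * Jnat (-s).toNat x

/-
Jacobi–Anger is the generating function identity `exp (x/2 (t - t⁻¹)) = ∑ₙ Jₙ(x) tⁿ` (`t ≠ 0`)
evaluated at `t = i e^{iθ}`, where `t - t⁻¹ = 2i cos θ`. The identity comes from multiplying
the exponential series of `x t / 2` and `-x / (2t)`: the product of the `k`-th and `l`-th terms
carries `t^(k - l)`, and collecting the terms with `k - l = n` gives exactly the power series
of `Jₙ(x)`. Absolute convergence of the double series justifies the regrouping and also gives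
absolute convergence over `n`.
-/

lemma Summable.norm_of_hasSum_fiberwise {β γ E : Type*} [NormedAddCommGroup E]
    {f : β × γ → E} {g : β → E} (hf : Summable fun p => ‖f p‖)
    (hg : ∀ b, HasSum (fun c => f (b, c)) (g b)) : Summable fun b => ‖g b‖ :=
  hf.prod.of_nonneg_of_le (fun _ => norm_nonneg _) fun b =>
    (hg b).tsum_eq ▸ norm_tsum_le_tsum_norm (hf.prod_factor b)

lemma HasSum.eq_add_tsum_ne {β E : Type*} [UniformSpace E] [AddCommGroup E] [IsUniformAddGroup E]
    [CompleteSpace E] [T2Space E] {f : β → E} {a : E} (hf : HasSum f a) (b : β) :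
    a = f b + ∑' c : {c // c ≠ b}, f c := by
  rw [← hf.tsum_eq, ← (hf.summable.subtype (· ∈ ({b} : Set β))).tsum_add_tsum_compl
    (hf.summable.subtype _), tsum_singleton b f]
  rfl

noncomputable def JnatTerm (n : ℕ) (x : ℝ) (m : ℕ) : ℝ :=
  ((-1 : ℝ) ^ m / (m.factorial * (m + n).factorial)) * (x / 2) ^ (2 * m + n)

lemma JnatTerm_eq (n : ℕ) (x : ℝ) (m : ℕ) :
    JnatTerm n x m = (x / 2) ^ n * ((-(x / 2) ^ 2) ^ m / m.factorial) / (m + n).factorial := by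
  rw [JnatTerm, neg_pow ((x / 2) ^ 2), pow_add, pow_mul]
  ring

lemma summable_JnatTerm (n : ℕ) (x : ℝ) : Summable (JnatTerm n x) := by
  refine .of_norm_bounded ((NormedSpace.norm_expSeries_div_summable (-(x / 2) ^ 2)).mul_left
    (‖x / 2‖ ^ n)) fun m => ?_
  rw [JnatTerm_eq, norm_div, norm_mul, norm_pow, Real.norm_natCast]
  exact div_le_self (by positivity) (mod_cast Nat.one_le_iff_ne_zero.2 (Nat.factorial_ne_zero _))

lemma hasSum_JnatTerm (n : ℕ) (x : ℝ) : HasSum (JnatTerm n x) (Jnat n x) :=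
  (summable_JnatTerm n x).hasSum

lemma J_natCast (k : ℕ) (x : ℝ) : J k x = Jnat k x := by
  simp [J]

lemma J_neg_natCast (k : ℕ) (x : ℝ) : J (-k) x = (-1) ^ k * Jnat k x := by
  rcases k.eq_zero_or_pos with rfl | hk
  · simp [J]
  · simp [J, hk.ne']

noncomputable def expMulExpTerm (a b : ℂ) (p : ℕ × ℕ) : ℂ :=
  a ^ p.1 / p.1.factorial * (b ^ p.2 / p.2.factorial)

lemma expMulExpTerm_swap (a b : ℂ) (k l : ℕ) :
    expMulExpTerm a b (k, l) = expMulExpTerm b a (l, k) :=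
  mul_comm _ _

lemma summable_norm_expMulExpTerm (a b : ℂ) : Summable fun p => ‖expMulExpTerm a b p‖ :=
  Summable.mul_norm (f := fun k : ℕ => a ^ k / k.factorial)
    (g := fun k : ℕ => b ^ k / k.factorial)
    (NormedSpace.norm_expSeries_div_summable a) (NormedSpace.norm_expSeries_div_summable b)

lemma hasSum_expMulExpTerm (a b : ℂ) :
    HasSum (expMulExpTerm a b) (exp a * exp b) := by
  rw [exp_eq_exp_ℂ]
  exact HasSum.mul (f := fun k : ℕ => a ^ k / k.factorial)
    (g := fun k : ℕ => b ^ k / k.factorial)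
    (NormedSpace.expSeries_div_hasSum_exp a) (NormedSpace.expSeries_div_hasSum_exp b)
    (summable_norm_expMulExpTerm a b).of_norm

lemma expMulExpTerm_eq_JnatTerm_mul_pow (x : ℝ) {u v : ℂ} (huv : u * v = 1) (k m : ℕ) :
    expMulExpTerm ((x : ℂ) / 2 * u) (-(x : ℂ) / 2 * v) (m + k, m) = JnatTerm k x m * u ^ k := by
  have hprod : ((x : ℂ) / 2 * u) * (-(x : ℂ) / 2 * v) = -((x : ℂ) / 2) ^ 2 := by
    linear_combination (-((x : ℂ) / 2) ^ 2) * huv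
  rw [expMulExpTerm, JnatTerm_eq, pow_add, show ∀ a b : ℂ,
    a ^ m * a ^ k / (m + k).factorial * (b ^ m / m.factorial) =
      (a * b) ^ m / m.factorial / (m + k).factorial * a ^ k from fun a b => by ring, hprod]
  push_cast
  ring

def intProdNatEquivByDiff : ℤ × ℕ ≃ ℕ × ℕ where
  toFun p := (p.2 + p.1.toNat, p.2 + (-p.1).toNat)
  invFun q := ((q.1 : ℤ) - q.2, min q.1 q.2)
  left_inv p := by
    obtain ⟨n, m⟩ := p
    simp only [Prod.mk.injEq]
    omega
  right_inv q := by
    obtain ⟨a, b⟩ := q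
    simp only [Prod.mk.injEq]
    omega

@[simp] lemma intProdNatEquivByDiff_natCast (k m : ℕ) :
    intProdNatEquivByDiff (k, m) = (m + k, m) := by
  simp [intProdNatEquivByDiff]

@[simp] lemma intProdNatEquivByDiff_neg_natCast (k m : ℕ) :
    intProdNatEquivByDiff (-k, m) = (m, m + k) := by
  simp [intProdNatEquivByDiff]

lemma hasSum_expMulExpTerm_fiber (x : ℝ) {t : ℂ} (ht : t ≠ 0) (n : ℤ) :
    HasSum (fun m => expMulExpTerm ((x : ℂ) / 2 * t) (-(x : ℂ) / 2 * t⁻¹)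
      (intProdNatEquivByDiff (n, m))) (J n x * t ^ n) := by
  obtain ⟨k, rfl | rfl⟩ := Int.eq_nat_or_neg n
  · simp only [intProdNatEquivByDiff_natCast,
      expMulExpTerm_eq_JnatTerm_mul_pow x (mul_inv_cancel₀ ht), J_natCast, zpow_natCast]
    exact (hasSum_ofReal.2 (hasSum_JnatTerm k x)).mul_right _
  · have hswap : -t⁻¹ * -t = 1 := by rw [neg_mul_neg, inv_mul_cancel₀ ht]
    have hterm (m : ℕ) : expMulExpTerm ((x : ℂ) / 2 * t) (-(x : ℂ) / 2 * t⁻¹) (m, m + k) =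
        JnatTerm k x m * (-t⁻¹) ^ k := by
      rw [expMulExpTerm_swap, show -(x : ℂ) / 2 * t⁻¹ = x / 2 * -t⁻¹ by ring,
        show (x : ℂ) / 2 * t = -(x : ℂ) / 2 * -t by ring]
      exact expMulExpTerm_eq_JnatTerm_mul_pow x hswap k m
    have hJ : (J (-k) x : ℂ) * t ^ (-k : ℤ) = Jnat k x * (-t⁻¹) ^ k := by
      rw [J_neg_natCast, zpow_neg, zpow_natCast, neg_pow t⁻¹, inv_pow]
      push_cast
      ring
    simp only [intProdNatEquivByDiff_neg_natCast, hterm, hJ]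
    exact (hasSum_ofReal.2 (hasSum_JnatTerm k x)).mul_right _

theorem hasSum_J_mul_zpow (x : ℝ) {t : ℂ} (ht : t ≠ 0) :
    HasSum (fun n : ℤ => (J n x : ℂ) * t ^ n) (exp (x / 2 * (t - t⁻¹))) := by
  have h := hasSum_expMulExpTerm ((x : ℂ) / 2 * t) (-(x : ℂ) / 2 * t⁻¹)
  rw [← exp_add, show (x : ℂ) / 2 * t + -(x : ℂ) / 2 * t⁻¹ = x / 2 * (t - t⁻¹) by ring,
    ← intProdNatEquivByDiff.hasSum_iff] at h
  exact h.prod_fiberwise (hasSum_expMulExpTerm_fiber x ht)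

theorem summable_norm_J_mul_zpow (x : ℝ) {t : ℂ} (ht : t ≠ 0) :
    Summable fun n : ℤ => ‖(J n x : ℂ) * t ^ n‖ :=
  Summable.norm_of_hasSum_fiberwise
    (intProdNatEquivByDiff.summable_iff.2 (summable_norm_expMulExpTerm _ _))
    (hasSum_expMulExpTerm_fiber x ht)

lemma I_mul_exp_sub_inv (θ : ℝ) :
    I * exp (I * θ) - (I * exp (I * θ))⁻¹ = 2 * I * Real.cos θ := by
  rw [mul_inv, inv_I, ← exp_neg, ofReal_cos, cos]
  ring_nf

/-- Jacobi–Anger expansion: `e^{i x cos θ} = J₀(x) + ∑_{s ≠ 0} iˢ J_s(x) e^{i s θ}`,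
with absolute convergence of the series over nonzero integers. -/
theorem jacobi_anger (x θ : ℝ) :
    Summable (fun s : {s : ℤ // s ≠ 0} =>
      ‖Complex.I ^ (s : ℤ) * (J s x : ℂ) *
        Complex.exp (Complex.I * ((s : ℤ) : ℂ) * (θ : ℂ))‖) ∧
    Complex.exp (Complex.I * (x : ℂ) * ((Real.cos θ : ℝ) : ℂ)) =
      (J 0 x : ℂ) + ∑' s : {s : ℤ // s ≠ 0},
        Complex.I ^ (s : ℤ) * (J s x : ℂ) *
          Complex.exp (Complex.I * ((s : ℤ) : ℂ) * (θ : ℂ)) := by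
  set t := I * exp (I * θ)
  have ht : t ≠ 0 := mul_ne_zero I_ne_zero (exp_ne_zero _)
  have hterm (n : ℤ) : (J n x : ℂ) * t ^ n = I ^ n * J n x * exp (I * n * θ) := by
    rw [mul_zpow, ← exp_int_mul]
    ring_nf
  have hexp : (x : ℂ) / 2 * (t - t⁻¹) = I * x * Real.cos θ := by
    rw [I_mul_exp_sub_inv]
    ring
  have hsum := hasSum_J_mul_zpow x ht
  simp only [hterm, hexp] at hsum
  refine ⟨?_, ?_⟩
  · exact ((summable_norm_J_mul_zpow x ht).subtype _).congr fun s => by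
      rw [Function.comp_apply, hterm]
  · rw [hsum.eq_add_tsum_ne 0]
    simp
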